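/- arXiv:1705.05346 — 3 statements merged into one kernel-verified Lean document; each statement's English description precedes it below -/
import Mathlib

section
/- Let N and k be positive integers with k < N, and let p ≥ 1. Then there exists a C² function u : ℝ^N → ℝ with u(x) > 0 for every x and P⁻_k(D²u(x)) + u(x)^p = 0 for every x ∈ ℝ^N. Explicitly, for any μ > 0 one may take u(x) = [ 2k / ((p−1)(μ + |x|²)) ]^{1/(p−1)} when p > 1, and u(x) = μ·exp(−|x|²/(2k)) when p = 1. -/
open scoped BigOperators

/-- The eigenvalues of a symmetric real matrix, listed in nondecreasing order with
multiplicity (junk value `0` if the matrix is not Hermitian). -/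
noncomputable def sortedEig {n : ℕ} (A : Matrix (Fin n) (Fin n) ℝ) : Fin n → ℝ :=
  if h : A.IsHermitian then h.eigenvalues ∘ Tuple.sort h.eigenvalues else 0

/-- `P⁻_k(A)`: the sum of the `k` smallest eigenvalues of `A`. -/
noncomputable def Pminus {n : ℕ} (k : ℕ) (A : Matrix (Fin n) (Fin n) ℝ) : ℝ :=
  ∑ i : Fin n, if (i : ℕ) < k then sortedEig A i else 0

/-- `P⁺_k(A)`: the sum of the `k` largest eigenvalues of `A`. -/
noncomputable def Pplus {n : ℕ} (k : ℕ) (A : Matrix (Fin n) (Fin n) ℝ) : ℝ :=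
  ∑ i : Fin n, if n - k ≤ (i : ℕ) then sortedEig A i else 0

/-- The Hessian matrix `D²u(x)` of `u : ℝ^N → ℝ` at `x`. -/
noncomputable def hessianMatrix {N : ℕ} (u : EuclideanSpace ℝ (Fin N) → ℝ)
    (x : EuclideanSpace ℝ (Fin N)) : Matrix (Fin N) (Fin N) ℝ :=
  fun i j => iteratedFDeriv ℝ 2 u x ![EuclideanSpace.single i 1, EuclideanSpace.single j 1]

/-- `u` is a viscosity supersolution of `F(D²u) + g(u) = 0` in `Ω`. -/
def IsViscositySupersolution {N : ℕ} (F : Matrix (Fin N) (Fin N) ℝ → ℝ) (g : ℝ → ℝ)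
    (Ω : Set (EuclideanSpace ℝ (Fin N))) (u : EuclideanSpace ℝ (Fin N) → ℝ) : Prop :=
  ∀ x₀ ∈ Ω, ∀ φ : EuclideanSpace ℝ (Fin N) → ℝ, ContDiff ℝ 2 φ →
    IsLocalMinOn (fun x => u x - φ x) Ω x₀ →
      F (hessianMatrix φ x₀) + g (u x₀) ≤ 0

/-- `u` is a viscosity subsolution of `F(D²u) + g(u) = 0` in `Ω`. -/
def IsViscositySubsolution {N : ℕ} (F : Matrix (Fin N) (Fin N) ℝ → ℝ) (g : ℝ → ℝ)
    (Ω : Set (EuclideanSpace ℝ (Fin N))) (u : EuclideanSpace ℝ (Fin N) → ℝ) : Prop :=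
  ∀ x₀ ∈ Ω, ∀ φ : EuclideanSpace ℝ (Fin N) → ℝ, ContDiff ℝ 2 φ →
    IsLocalMaxOn (fun x => u x - φ x) Ω x₀ →
      0 ≤ F (hessianMatrix φ x₀) + g (u x₀)

/-- `u` is a viscosity solution of `F(D²u) + g(u) = 0` in `Ω`. -/
def IsViscositySolution {N : ℕ} (F : Matrix (Fin N) (Fin N) ℝ → ℝ) (g : ℝ → ℝ)
    (Ω : Set (EuclideanSpace ℝ (Fin N))) (u : EuclideanSpace ℝ (Fin N) → ℝ) : Prop :=
  IsViscositySubsolution F g Ω u ∧ IsViscositySupersolution F g Ω u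

/-!
For a radial function `u x = g ‖x‖²` one has `D²u(x) = 2 g'(‖x‖²) I + 4 g''(‖x‖²) x xᵀ`.
If `g'' ≥ 0` this is a multiple of the identity plus a positive semidefinite rank-one matrix, so
all its eigenvalues but the largest equal `2 g'(‖x‖²)` (the trace leaves room for only one larger
one); as `k < N`, `P⁻_k(D²u) = 2 k g'(‖x‖²)`. The equation thus reduces to the ODE
`2 k g' + g ^ p = 0`, which the two convex profiles of the statement solve.
-/

open Matrix
open scoped RealInnerProductSpace

lemma eigenvalue_smul_one_add_smul_vecMulVec {𝕜 n : Type*} [Field 𝕜] [Fintype n]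
    [DecidableEq n] {a b μ : 𝕜} {x v : n → 𝕜}
    (hv : (a • 1 + b • vecMulVec x x) *ᵥ v = μ • v) (hv0 : v ≠ 0) :
    μ = a ∨ μ = a + b * (x ⬝ᵥ x) := by
  have key : (μ - a) • v = (b * (x ⬝ᵥ v)) • x := by
    rw [add_mulVec, smul_mulVec, smul_mulVec, one_mulVec, vecMulVec_mulVec,
      op_smul_eq_smul] at hv
    rw [sub_smul, ← hv, mul_smul]
    abel
  by_cases hbv : b * (x ⬝ᵥ v) = 0
  · left
    rw [hbv, zero_smul, smul_eq_zero] at key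
    exact sub_eq_zero.1 (key.resolve_right hv0)
  · right
    have hdot := congrArg (x ⬝ᵥ ·) key
    simp only [dotProduct_smul, smul_eq_mul] at hdot
    have hxv : x ⬝ᵥ v ≠ 0 := right_ne_zero_of_mul hbv
    have : μ - a = b * (x ⬝ᵥ x) := by
      apply mul_right_cancel₀ hxv
      rw [hdot]; ring
    linear_combination this

lemma eq_of_lt_of_monotone_of_sum_eq {ι : Type*} [Fintype ι] [Preorder ι] [DecidableEq ι]
    {g : ι → ℝ} {a c : ℝ} (hg : Monotone g) (hc : 0 ≤ c) (hval : ∀ i, g i = a ∨ g i = a + c)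
    (hsum : ∑ i, g i = Fintype.card ι * a + c) {i j : ι} (hij : i < j) : g i = a := by
  -- the excesses `g l - a` are nonnegative and sum to `c`, so at most one of them equals `c > 0`
  rcases hval i with hi | hi
  · exact hi
  rcases hc.eq_or_lt with hc0 | hcpos
  · rw [hi, ← hc0, add_zero]
  have hj : g j = a + c := by
    rcases hval j with hj | hj
    · linarith [hg hij.le]
    · exact hj
  have hexcess : ∑ l, (g l - a) = c := by
    rw [Finset.sum_sub_distrib, hsum, Finset.sum_const, Finset.card_univ, nsmul_eq_mul]
    ring
  have hpair : ∑ l ∈ {i, j}, (g l - a) ≤ ∑ l, (g l - a) :=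
    Finset.sum_le_sum_of_subset_of_nonneg (Finset.subset_univ _)
      fun l _ _ => by rcases hval l with h | h <;> rw [h] <;> linarith
  rw [Finset.sum_pair hij.ne, hi, hj] at hpair
  linarith

lemma sortedEig_smul_one_add_smul_vecMulVec {n : ℕ} {a b : ℝ} {x : Fin n → ℝ}
    (hb : 0 ≤ b * (x ⬝ᵥ x)) {i : Fin n} (hi : (i : ℕ) + 1 < n) :
    sortedEig (a • 1 + b • vecMulVec x x) i = a := by
  have hA : (a • 1 + b • vecMulVec x x).IsHermitian :=
    (isHermitian_one.smul (IsSelfAdjoint.all a)).add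
      ((by simp [IsHermitian] : (vecMulVec x x).IsHermitian).smul (IsSelfAdjoint.all b))
  rw [sortedEig, dif_pos hA]
  have hsum : ∑ l, (hA.eigenvalues ∘ Tuple.sort hA.eigenvalues) l = n * a + b * (x ⬝ᵥ x) := by
    rw [Function.comp_def, Equiv.sum_comp (Tuple.sort hA.eigenvalues) hA.eigenvalues]
    have := hA.trace_eq_sum_eigenvalues
    simp only [RCLike.ofReal_real_eq_id, id] at this
    rw [← this, trace_add, trace_smul, trace_smul, trace_one, trace_vecMulVec,
      Fintype.card_fin, smul_eq_mul, smul_eq_mul, mul_comm]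
  refine eq_of_lt_of_monotone_of_sum_eq (Tuple.monotone_sort _) hb
    (fun l => eigenvalue_smul_one_add_smul_vecMulVec (hA.mulVec_eigenvectorBasis _)
      ((WithLp.ofLp_eq_zero 2).ne.2 <| hA.eigenvectorBasis.orthonormal.ne_zero _))
    (by simpa using hsum) (j := ⟨n - 1, by omega⟩) (Fin.lt_def.2 (by simp; omega))

lemma Pminus_eq_of_sortedEig_eq {n k : ℕ} {A : Matrix (Fin n) (Fin n) ℝ} {a : ℝ} (hk : k ≤ n)
    (h : ∀ i : Fin n, (i : ℕ) < k → sortedEig A i = a) : Pminus k A = k * a := by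
  rw [Pminus, Finset.sum_congr rfl fun i _ => ite_congr rfl (h i) fun _ => rfl,
    ← Finset.sum_filter, Finset.sum_const, Fin.card_filter_val_lt, min_eq_right hk, nsmul_eq_mul]

lemma Pminus_smul_one_add_smul_vecMulVec {n k : ℕ} (hk : k < n) {a b : ℝ} {x : Fin n → ℝ}
    (hb : 0 ≤ b * (x ⬝ᵥ x)) : Pminus k (a • 1 + b • vecMulVec x x) = k * a :=
  Pminus_eq_of_sortedEig_eq hk.le fun _ hi =>
    sortedEig_smul_one_add_smul_vecMulVec hb (by omega)

section Radial

variable {E : Type*} [NormedAddCommGroup E] [InnerProductSpace ℝ E]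

lemma hasFDerivAt_comp_norm_sq {g : ℝ → ℝ} {g' : ℝ} {x : E} (hg : HasDerivAt g g' (‖x‖ ^ 2)) :
    HasFDerivAt (fun y : E => g (‖y‖ ^ 2)) ((2 * g') • innerSL ℝ x) x := by
  refine (hg.comp_hasFDerivAt x (hasStrictFDerivAt_norm_sq x).hasFDerivAt).congr_fderiv ?_
  ext v
  simp only [_root_.smul_apply, coe_innerSL_apply, nsmul_eq_mul, Nat.cast_ofNat, smul_eq_mul]
  ring

lemma iteratedFDeriv_two_comp_norm_sq {g g' : ℝ → ℝ} {g'' : ℝ}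
    (hg : ∀ t, 0 ≤ t → HasDerivAt g (g' t) t) {x : E} (hg' : HasDerivAt g' g'' (‖x‖ ^ 2))
    (v w : E) :
    iteratedFDeriv ℝ 2 (fun y : E => g (‖y‖ ^ 2)) x ![v, w] =
      2 * g' (‖x‖ ^ 2) * ⟪v, w⟫ + 4 * g'' * ⟪x, v⟫ * ⟪x, w⟫ := by
  have hDu : fderiv ℝ (fun y : E => g (‖y‖ ^ 2)) = fun y => (2 * g' (‖y‖ ^ 2)) • innerSL ℝ y :=
    funext fun y => (hasFDerivAt_comp_norm_sq (hg _ (by positivity))).fderiv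
  have hD2u : HasFDerivAt (fun y => (2 * g' (‖y‖ ^ 2)) • innerSL ℝ y) _ x :=
    ((hasFDerivAt_comp_norm_sq hg').const_mul 2).smul (innerSL ℝ (E := E)).hasFDerivAt
  rw [iteratedFDeriv_two_apply, hDu, hD2u.fderiv]
  simp only [Fin.isValue, cons_val_zero, _root_.add_apply, _root_.smul_apply,
    ContinuousLinearMap.smulRight_apply, coe_innerSL_apply, smul_eq_mul, cons_val_one,
    cons_val_fin_one]
  erw [innerSL_apply_apply]
  ring

end Radial

lemma hessianMatrix_comp_norm_sq {N : ℕ} {g g' : ℝ → ℝ} {g'' : ℝ}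
    (hg : ∀ t, 0 ≤ t → HasDerivAt g (g' t) t) {x : EuclideanSpace ℝ (Fin N)}
    (hg' : HasDerivAt g' g'' (‖x‖ ^ 2)) :
    hessianMatrix (fun y => g (‖y‖ ^ 2)) x =
      (2 * g' (‖x‖ ^ 2)) • 1 + (4 * g'') • vecMulVec x x := by
  ext i j
  rw [hessianMatrix, iteratedFDeriv_two_comp_norm_sq hg hg']
  simp [EuclideanSpace.inner_single_right, one_apply, vecMulVec_apply, eq_comm, mul_assoc]

lemma Pminus_hessianMatrix_comp_norm_sq {N k : ℕ} (hk : k < N) {g g' g'' : ℝ → ℝ}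
    (hg : ∀ t, 0 ≤ t → HasDerivAt g (g' t) t) (hg' : ∀ t, 0 ≤ t → HasDerivAt g' (g'' t) t)
    (hg'' : ∀ t, 0 ≤ t → 0 ≤ g'' t) (x : EuclideanSpace ℝ (Fin N)) :
    Pminus k (hessianMatrix (fun y => g (‖y‖ ^ 2)) x) = 2 * k * g' (‖x‖ ^ 2) := by
  have hx : (0 : ℝ) ≤ ‖x‖ ^ 2 := by positivity
  have hxx : x ⬝ᵥ x = ‖x‖ ^ 2 := by
    rw [← real_inner_self_eq_norm_sq, EuclideanSpace.inner_eq_star_dotProduct]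
    simp
  rw [hessianMatrix_comp_norm_sq hg (hg' _ hx), Pminus_smul_one_add_smul_vecMulVec hk
    (by rw [hxx]; exact mul_nonneg (mul_nonneg zero_le_four (hg'' _ hx)) hx)]
  ring

def IsPositiveSolution {N : ℕ} (k : ℕ) (p : ℝ) (u : EuclideanSpace ℝ (Fin N) → ℝ) : Prop :=
  ContDiff ℝ 2 u ∧ (∀ x, 0 < u x) ∧ ∀ x, Pminus k (hessianMatrix u x) + u x ^ p = 0

section Profiles

variable {N k : ℕ} {μ : ℝ}

open Real

lemma isPositiveSolution_gaussian (hk : 0 < k) (hkN : k < N) (hμ : 0 < μ) :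
    IsPositiveSolution k 1
      (fun x : EuclideanSpace ℝ (Fin N) => μ * exp (-‖x‖ ^ 2 / (2 * (k : ℝ)))) := by
  set c : ℝ := 2 * k
  have hc : 0 < c := by positivity
  have hexp (a t : ℝ) : HasDerivAt (fun t => a * exp (-t / c)) (-(a / c) * exp (-t / c)) t := by
    refine (((hasDerivAt_id t).neg.div_const c).exp.const_mul a).congr_deriv ?_
    simp only [Pi.neg_apply, id]
    ring
  refine ⟨contDiff_const.mul (contDiff_exp.comp ((contDiff_norm_sq ℝ).neg.div_const _)),
    fun x => by positivity, fun x => ?_⟩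
  rw [Pminus_hessianMatrix_comp_norm_sq hkN (fun t _ => hexp μ t) (fun t _ => hexp _ t)
    (fun t _ => mul_nonneg (by rw [neg_div, neg_neg]; positivity) (exp_pos _).le), rpow_one]
  field_simp
  ring

lemma isPositiveSolution_power (hk : 0 < k) (hkN : k < N) {p : ℝ} (hp : 1 < p) (hμ : 0 < μ) :
    IsPositiveSolution k p (fun x : EuclideanSpace ℝ (Fin N) =>
      (2 * (k : ℝ) / ((p - 1) * (μ + ‖x‖ ^ 2))) ^ (1 / (p - 1))) := by
  have hp1 : 0 < p - 1 := sub_pos.2 hp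
  set α : ℝ := 1 / (p - 1) with hα
  set h : ℝ → ℝ := fun t => 2 * k / ((p - 1) * (μ + t)) with hh
  have h_pos {t : ℝ} (ht : 0 ≤ t) : 0 < h t := by positivity
  have hderiv_h {t : ℝ} (ht : 0 ≤ t) : HasDerivAt h (-h t / (μ + t)) t := by
    refine ((hasDerivAt_const t (2 * (k : ℝ))).div
      (((hasDerivAt_id t).const_add μ).const_mul (p - 1)) (by positivity)).congr_deriv ?_
    simp only [hh, id]
    field_simp
    ring
  have hderiv_g {t : ℝ} (ht : 0 ≤ t) :
      HasDerivAt (fun t => h t ^ α) (-α * h t ^ α / (μ + t)) t := by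
    refine ((hderiv_h ht).rpow_const (Or.inl (h_pos ht).ne')).congr_deriv ?_
    rw [rpow_sub_one (h_pos ht).ne']
    have := h_pos ht
    field_simp
  have hderiv_g' {t : ℝ} (ht : 0 ≤ t) : HasDerivAt (fun t => -α * h t ^ α / (μ + t))
      (α * (α + 1) * h t ^ α / (μ + t) ^ 2) t := by
    refine (((hderiv_g ht).const_mul (-α)).div ((hasDerivAt_id t).const_add μ)
      (by positivity)).congr_deriv ?_
    simp only [id]
    field_simp
    ring
  refine ⟨?_, fun x => rpow_pos_of_pos (h_pos (by positivity)) _, fun x => ?_⟩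
  · have hden : ContDiff ℝ 2 fun y : EuclideanSpace ℝ (Fin N) => (p - 1) * (μ + ‖y‖ ^ 2) :=
      contDiff_const.mul (contDiff_const.add (contDiff_norm_sq ℝ))
    refine contDiff_iff_contDiffAt.2 fun x => ?_
    exact (contDiffAt_const.div hden.contDiffAt (by positivity)).rpow_const_of_ne
      (h_pos (by positivity)).ne'
  · have hx : (0 : ℝ) ≤ ‖x‖ ^ 2 := by positivity
    rw [Pminus_hessianMatrix_comp_norm_sq hkN (fun _ => hderiv_g) (fun _ => hderiv_g')
      (fun t ht => by have := h_pos ht; positivity)]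
    have hαp : α * p = α + 1 := by rw [hα]; field_simp; ring
    have hpow : (h (‖x‖ ^ 2) ^ α) ^ p = h (‖x‖ ^ 2) ^ α * h (‖x‖ ^ 2) := by
      rw [← rpow_mul (h_pos hx).le, hαp, rpow_add_one (h_pos hx).ne']
    rw [hpow]
    simp only [hh, hα]
    field_simp
    ring

end Profiles

theorem statement4 (N k : ℕ) (hk : 0 < k) (hkN : k < N) (p : ℝ) (hp : 1 ≤ p) :
    (∃ u : EuclideanSpace ℝ (Fin N) → ℝ, ContDiff ℝ 2 u ∧ (∀ x, 0 < u x) ∧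
      ∀ x, Pminus k (hessianMatrix u x) + u x ^ p = 0) ∧
    (∀ μ : ℝ, 0 < μ →
      (1 < p →
        let u : EuclideanSpace ℝ (Fin N) → ℝ :=
          fun x => (2 * (k : ℝ) / ((p - 1) * (μ + ‖x‖ ^ 2))) ^ (1 / (p - 1))
        ContDiff ℝ 2 u ∧ (∀ x, 0 < u x) ∧
          ∀ x, Pminus k (hessianMatrix u x) + u x ^ p = 0) ∧
      (p = 1 →
        let u : EuclideanSpace ℝ (Fin N) → ℝ :=
          fun x => μ * Real.exp (-‖x‖ ^ 2 / (2 * (k : ℝ)))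
        ContDiff ℝ 2 u ∧ (∀ x, 0 < u x) ∧
          ∀ x, Pminus k (hessianMatrix u x) + u x ^ p = 0)) := by
  refine ⟨?_, fun μ hμ => ⟨fun hp' => isPositiveSolution_power hk hkN hp' hμ, ?_⟩⟩
  · rcases hp.lt_or_eq with hp' | rfl
    · exact ⟨_, isPositiveSolution_power hk hkN hp' one_pos⟩
    · exact ⟨_, isPositiveSolution_gaussian hk hkN one_pos⟩
  · rintro rfl
    exact isPositiveSolution_gaussian hk hkN hμ
end

section
/- Let N and k be positive integers with 2 < k < N, and let p > k/(k−2). For every μ > 0 and every β with 1/(p−1) ≤ β < (k−2)/2, setting C = μ^{β − 1/(p−1)} · (2β(k−2−2β))^{1/(p−1)}, the function u(x) = C·(μ + |x|²)^{−β} is a C² function on ℝ^N which is positive everywhere and satisfies P⁺_k(D²u(x)) + u(x)^p ≤ 0 for every x ∈ ℝ^N; that is, u is a positive classical supersolution of P⁺_k(D²u) + u^p = 0 in ℝ^N. -/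
open scoped BigOperators

/-!
With `q = μ + ‖x‖²`, the Hessian of `u = C q^(-β)` is `a • 1 + b • x xᵀ` with
`a = -2βC q^(-β-1)` and `b = 4β(β+1)C q^(-β-2) ≥ 0`. Every eigenvalue is at least `a`, so the
`k` largest sum to at most `trace - (N - k) a = k a + b ‖x‖² ≤ k a + b q = -2β(k-2-2β) C q^(-β-1)`.
The constant is chosen so that `C^(p-1) = μ^(β(p-1)-1) · 2β(k-2-2β)`; as `β(p-1) ≥ 1` and
`μ ≤ q`, this bounds `u^p` by `2β(k-2-2β) C q^(-β-1)`.
-/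

section Spectrum

open Matrix
open scoped ComplexOrder

theorem Matrix.IsHermitian.le_eigenvalues_of_posSemidef_sub {n 𝕜 : Type*} [Fintype n]
    [DecidableEq n] [RCLike 𝕜] {A : Matrix n n 𝕜} (hA : A.IsHermitian) {a : ℝ}
    (h : (A - (a : 𝕜) • 1).PosSemidef) (i : n) : a ≤ hA.eigenvalues i := by
  set v := ⇑(hA.eigenvectorBasis i)
  have hv : star v ⬝ᵥ v = 1 := by
    rw [dotProduct_comm]
    simp [← EuclideanSpace.inner_eq_star_dotProduct, v]
  have hsplit : A *ᵥ v = (A - (a : 𝕜) • 1) *ᵥ v + (a : 𝕜) • v := by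
    simp [sub_mulVec, smul_mulVec]
  have hquad := RCLike.nonneg_iff.mp (h.dotProduct_mulVec_nonneg v)
  rw [hA.eigenvalues_eq, hsplit, dotProduct_add, dotProduct_smul, hv, map_add]
  simp only [smul_eq_mul, mul_one, RCLike.ofReal_re]
  exact le_add_of_nonneg_left hquad.1

theorem sortedEig_of_isHermitian {n : ℕ} {A : Matrix (Fin n) (Fin n) ℝ} (hA : A.IsHermitian) :
    sortedEig A = hA.eigenvalues ∘ Tuple.sort hA.eigenvalues :=
  dif_pos hA

theorem sum_sortedEig {n : ℕ} {A : Matrix (Fin n) (Fin n) ℝ} (hA : A.IsHermitian) :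
    ∑ i, sortedEig A i = A.trace := by
  rw [sortedEig_of_isHermitian hA, hA.trace_eq_sum_eigenvalues]
  exact Equiv.sum_comp (Tuple.sort hA.eigenvalues) hA.eigenvalues

theorem Pplus_le_trace_sub {n k : ℕ} (hk : k ≤ n) {A : Matrix (Fin n) (Fin n) ℝ}
    (hA : A.IsHermitian) {a : ℝ} (ha : ∀ i, a ≤ hA.eigenvalues i) :
    Pplus k A ≤ A.trace - (n - k) * a := by
  have hbottom : ((n : ℝ) - k) * a ≤ ∑ i : Fin n, if (i : ℕ) < n - k then sortedEig A i else 0 :=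
    calc ((n : ℝ) - k) * a = ∑ i : Fin n, if (i : ℕ) < n - k then a else 0 := by
          rw [Finset.sum_ite, Finset.sum_const_zero, add_zero, Finset.sum_const,
            Fin.card_filter_val_lt, nsmul_eq_mul, min_eq_right (Nat.sub_le n k),
            Nat.cast_sub hk]
      _ ≤ _ := Finset.sum_le_sum fun i _ => by
          split_ifs
          · rw [sortedEig_of_isHermitian hA]; exact ha _
          · exact le_rfl
  have hsplit : Pplus k A + ∑ i : Fin n, (if (i : ℕ) < n - k then sortedEig A i else 0) =
      A.trace := by
    rw [← sum_sortedEig hA, Pplus, ← Finset.sum_add_distrib]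
    refine Finset.sum_congr rfl fun i _ => ?_
    by_cases h : n - k ≤ (i : ℕ)
    · rw [if_pos h, if_neg (by omega), add_zero]
    · rw [if_neg h, if_pos (by omega), zero_add]
  linarith

theorem Pplus_smul_one_add_smul_vecMulVec_le {n k : ℕ} (hk : k ≤ n) (a : ℝ) {b : ℝ}
    (hb : 0 ≤ b) (x : Fin n → ℝ) :
    Pplus k (a • 1 + b • vecMulVec x x) ≤ k * a + b * (x ⬝ᵥ x) := by
  have hpsd : (b • vecMulVec x x).PosSemidef := by
    simpa using (posSemidef_vecMulVec_self_star x).smul hb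
  have hA : (a • 1 + b • vecMulVec x x).IsHermitian :=
    (isHermitian_one.smul (IsSelfAdjoint.all a)).add hpsd.isHermitian
  have ha := hA.le_eigenvalues_of_posSemidef_sub (a := a) (by simpa using hpsd)
  calc Pplus k (a • 1 + b • vecMulVec x x) ≤ (a • 1 + b • vecMulVec x x).trace - (n - k) * a :=
        Pplus_le_trace_sub hk hA ha
    _ = k * a + b * (x ⬝ᵥ x) := by
        simp only [trace_add, trace_smul, trace_one, trace_vecMulVec, Fintype.card_fin,
          smul_eq_mul]
        ring

end Spectrum

section RadialPower

variable {E : Type*} [NormedAddCommGroup E] [InnerProductSpace ℝ E] {μ : ℝ}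

theorem contDiff_const_mul_rpow_add_norm_sq (hμ : 0 < μ) (K e : ℝ) {n : WithTop ℕ∞} :
    ContDiff ℝ n (fun z : E => K * (μ + ‖z‖ ^ 2) ^ e) :=
  contDiff_iff_contDiffAt.2 fun y =>
    contDiffAt_const.mul <| (contDiff_const.add (contDiff_norm_sq ℝ)).contDiffAt.rpow_const_of_ne
      (by positivity)

theorem hasFDerivAt_const_mul_rpow_add_norm_sq (hμ : 0 < μ) (K e : ℝ) (y : E) :
    HasFDerivAt (fun z : E => K * (μ + ‖z‖ ^ 2) ^ e)
      ((2 * K * e * (μ + ‖y‖ ^ 2) ^ (e - 1)) • innerSL ℝ y) y := by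
  have hnorm : HasFDerivAt (fun z : E => μ + ‖z‖ ^ 2) (2 • innerSL ℝ y) y :=
    ((hasFDerivAt_id y).norm_sq).const_add μ |>.congr_fderiv (by simp)
  have hpow : HasDerivAt (fun t : ℝ => t ^ e) (e * (μ + ‖y‖ ^ 2) ^ (e - 1)) (μ + ‖y‖ ^ 2) :=
    Real.hasDerivAt_rpow_const (Or.inl (by positivity))
  refine ((hpow.comp_hasFDerivAt y hnorm).const_mul K).congr_fderiv ?_
  ext z
  simp only [two_smul, smul_add, add_apply, smul_apply, coe_innerSL_apply, smul_eq_mul]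
  ring

end RadialPower

theorem hessianMatrix_apply_of_differentiableAt {N : ℕ} {u : EuclideanSpace ℝ (Fin N) → ℝ}
    {x : EuclideanSpace ℝ (Fin N)} (hu : DifferentiableAt ℝ (fderiv ℝ u) x) (i j : Fin N) :
    hessianMatrix u x i j = fderiv ℝ (fun y => fderiv ℝ u y (EuclideanSpace.single j 1)) x
      (EuclideanSpace.single i 1) := by
  rw [hessianMatrix, iteratedFDeriv_two_apply, fderiv_clm_apply hu (differentiableAt_const _)]
  simp

theorem hessianMatrix_const_mul_rpow_add_norm_sq {N : ℕ} {μ : ℝ} (hμ : 0 < μ) (K e : ℝ)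
    (x : EuclideanSpace ℝ (Fin N)) :
    hessianMatrix (fun y => K * (μ + ‖y‖ ^ 2) ^ e) x =
      (2 * K * e * (μ + ‖x‖ ^ 2) ^ (e - 1)) • 1 +
        (4 * K * e * (e - 1) * (μ + ‖x‖ ^ 2) ^ (e - 2)) • Matrix.vecMulVec ⇑x ⇑x := by
  set c : EuclideanSpace ℝ (Fin N) → ℝ := fun y => 2 * K * e * (μ + ‖y‖ ^ 2) ^ (e - 1)
  have hfderiv : fderiv ℝ (fun y => K * (μ + ‖y‖ ^ 2) ^ e) = fun y => c y • innerSL ℝ y :=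
    funext fun y => (hasFDerivAt_const_mul_rpow_add_norm_sq hμ K e y).fderiv
  have hdiff : DifferentiableAt ℝ (fderiv ℝ fun y => K * (μ + ‖y‖ ^ 2) ^ e) x :=
    ((contDiff_const_mul_rpow_add_norm_sq hμ K e (n := 2)).fderiv_right
      (m := 1) le_rfl).differentiable one_ne_zero x
  have hc := hasFDerivAt_const_mul_rpow_add_norm_sq hμ (2 * K * e) (e - 1) x
  ext i j
  rw [hessianMatrix_apply_of_differentiableAt hdiff, hfderiv]
  have hpartial : (fun y => (c y • innerSL ℝ y) (EuclideanSpace.single j 1)) =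
      fun y => c y * y j := by
    funext y
    simp [EuclideanSpace.inner_single_right]
  have hprod : HasFDerivAt (fun y => c y * y j) _ x :=
    hc.mul (EuclideanSpace.proj (𝕜 := ℝ) j).hasFDerivAt
  rw [hpartial, hprod.fderiv]
  simp only [sub_sub, one_add_one_eq_two, add_apply, smul_apply, PiLp.proj_apply,
    PiLp.single_apply, eq_comm (a := j), smul_eq_mul, mul_ite, mul_one, mul_zero,
    coe_innerSL_apply, EuclideanSpace.inner_single_right, Real.ringHom_apply, one_mul,
    Matrix.add_apply, Matrix.smul_apply, Matrix.one_apply, Matrix.vecMulVec_apply, add_right_inj]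
  ring

theorem Pplus_hessianMatrix_const_mul_rpow_le {N k : ℕ} (hk : k ≤ N) {μ C β : ℝ} (hμ : 0 < μ)
    (hC : 0 ≤ C) (hβ : 0 ≤ β) (x : EuclideanSpace ℝ (Fin N)) :
    Pplus k (hessianMatrix (fun y => C * (μ + ‖y‖ ^ 2) ^ (-β)) x) ≤
      -(2 * β * (k - 2 - 2 * β)) * C * (μ + ‖x‖ ^ 2) ^ (-β - 1) := by
  set q := μ + ‖x‖ ^ 2
  have hq : 0 < q := by positivity
  have hb : 0 ≤ 4 * C * -β * (-β - 1) * q ^ (-β - 2) := by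
    rw [show 4 * C * -β * (-β - 1) = 4 * C * (β * (β + 1)) by ring]
    positivity
  have hnorm : ⇑x ⬝ᵥ ⇑x ≤ q := by
    have : ⇑x ⬝ᵥ ⇑x = ‖x‖ ^ 2 := by
      rw [EuclideanSpace.real_norm_sq_eq]
      simp only [dotProduct, sq]
    linarith
  have hpow : q ^ (-β - 2) * q = q ^ (-β - 1) := by
    rw [← Real.rpow_add_one hq.ne']; ring_nf
  rw [hessianMatrix_const_mul_rpow_add_norm_sq hμ]
  calc _ ≤ k * (2 * C * -β * q ^ (-β - 1)) + 4 * C * -β * (-β - 1) * q ^ (-β - 2) * (⇑x ⬝ᵥ ⇑x) :=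
        Pplus_smul_one_add_smul_vecMulVec_le hk _ hb _
    _ ≤ k * (2 * C * -β * q ^ (-β - 1)) + 4 * C * -β * (-β - 1) * q ^ (-β - 2) * q := by
        gcongr
    _ = -(2 * β * (k - 2 - 2 * β)) * C * q ^ (-β - 1) := by
        rw [mul_assoc _ (q ^ (-β - 2)), hpow]; ring

theorem rpow_sub_one_of_eq_mul_rpow {μ β p D C : ℝ} (hμ : 0 < μ) (hD : 0 ≤ D) (hp : p ≠ 1)
    (hC : C = μ ^ (β - 1 / (p - 1)) * D ^ (1 / (p - 1))) :
    C ^ (p - 1) = μ ^ (β * (p - 1) - 1) * D := by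
  have hp' : p - 1 ≠ 0 := sub_ne_zero.2 hp
  rw [hC, Real.mul_rpow (by positivity) (by positivity), ← Real.rpow_mul hμ.le,
    ← Real.rpow_mul hD, one_div_mul_cancel hp', Real.rpow_one, sub_mul, one_div_mul_cancel hp']

theorem rpow_mul_rpow_neg_le {μ β p D C q : ℝ} (hμ : 0 < μ) (hμq : μ ≤ q) (hD : 0 < D)
    (hp : 1 < p) (hβ : 1 / (p - 1) ≤ β) (hC : C = μ ^ (β - 1 / (p - 1)) * D ^ (1 / (p - 1))) :
    (C * q ^ (-β)) ^ p ≤ D * C * q ^ (-β - 1) := by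
  have hq : 0 < q := hμ.trans_le hμq
  have hCpos : 0 < C := hC ▸ by positivity
  have hexp : 0 ≤ β * (p - 1) - 1 := by
    rw [div_le_iff₀ (by linarith)] at hβ
    linarith
  calc (C * q ^ (-β)) ^ p = C ^ (p - 1) * C * q ^ (-β * p) := by
        rw [Real.mul_rpow hCpos.le (by positivity), ← Real.rpow_mul hq.le,
          ← Real.rpow_add_one hCpos.ne', sub_add_cancel]
    _ = μ ^ (β * (p - 1) - 1) * D * C * q ^ (-β * p) := by
        rw [rpow_sub_one_of_eq_mul_rpow hμ hD.le hp.ne' hC]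
    _ ≤ q ^ (β * (p - 1) - 1) * D * C * q ^ (-β * p) := by
        gcongr
    _ = D * C * q ^ (-β - 1) := by
        rw [show -β - 1 = (β * (p - 1) - 1) + -β * p by ring, Real.rpow_add hq]
        ring

theorem statement7 (N k : ℕ) (hk2 : 2 < k) (hkN : k < N) (p : ℝ)
    (hp : (k : ℝ) / ((k : ℝ) - 2) < p) (μ : ℝ) (hμ : 0 < μ)
    (β : ℝ) (hβ1 : 1 / (p - 1) ≤ β) (hβ2 : β < ((k : ℝ) - 2) / 2) :
    let C : ℝ := μ ^ (β - 1 / (p - 1)) * (2 * β * ((k : ℝ) - 2 - 2 * β)) ^ (1 / (p - 1))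
    let u : EuclideanSpace ℝ (Fin N) → ℝ := fun x => C * (μ + ‖x‖ ^ 2) ^ (-β)
    ContDiff ℝ 2 u ∧ (∀ x, 0 < u x) ∧
      ∀ x, Pplus k (hessianMatrix u x) + u x ^ p ≤ 0 := by
  intro C u
  have hk : (2 : ℝ) < k := by exact_mod_cast hk2
  have hp1 : 1 < p := lt_of_le_of_lt ((one_le_div (by linarith)).2 (by linarith)) hp
  have hβ : 0 < β := lt_of_lt_of_le (one_div_pos.2 (by linarith)) hβ1
  have hD : 0 < 2 * β * ((k : ℝ) - 2 - 2 * β) := mul_pos (by positivity) (by linarith)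
  have hC : 0 < C := by positivity
  refine ⟨contDiff_const_mul_rpow_add_norm_sq hμ C (-β), fun x => by positivity, fun x => ?_⟩
  have hPplus := Pplus_hessianMatrix_const_mul_rpow_le hkN.le hμ hC.le hβ.le x
  have hpow := rpow_mul_rpow_neg_le hμ (le_add_of_nonneg_right (sq_nonneg ‖x‖)) hD hp1 hβ1 rfl
  linarith
end

section
/- Hadamard three circles theorem in the half-space: let N and k be positive integers with k < N, and let u be a nonnegative lower semicontinuous function on the closure of ℝ^N_+ which is a viscosity supersolution of P⁺_k(D²u) = 0 in ℝ^N_+. For r > 0 set μ(r) = inf { u(x)/x_N : x ∈ ℝ^N_+, |x| ≤ r }. Then for every 0 < r₁ < r₂ and every r with r₁ ≤ r ≤ r₂, μ(r) ≥ [μ(r₁)(r^{−k} − r₂^{−k}) + μ(r₂)(r₁^{−k} − r^{−k})]/(r₁^{−k} − r₂^{−k}). In particular the map r ↦ μ(r)·r^k is nondecreasing on (0, +∞). -/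
open scoped BigOperators

/-!
Barrier argument. Since `μ` is nonincreasing, the function `A + B t^{-k}` that agrees with `μ` at
`r₁` and `r₂` has `B ≥ 0`, and it suffices to show `u(x) ≥ x_N (A + B |x|^{-k})` on the half-annulus
`r₁ ≤ |x| ≤ r₂`. For `Φ(x) = x_N g(|x|²)`, the Hessian quadratic form of `Φ` summed over an
orthonormal frame made of `x/|x|` and `k - 1` vectors orthogonal to `x` equals
`x_N ((2k + 4) g' + 4 |x|² g'')`; by Ky Fan's inequality this is a lower bound for `P⁺_k(D²Φ)`.
It vanishes for `g = s^{-k/2}` and is positive for `g = s^{-k}`, so adding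
`ε x_N (|x|^{-2k} - r₁^{-2k})` to the barrier gives a strict subsolution lying below `u` on the
boundary of the half-annulus. It cannot touch the supersolution `u` from below inside, and letting
`ε → 0` gives the three circles inequality. Letting `r₂ → ∞` and using `μ ≥ 0` gives the
monotonicity of `μ(r) r^k`.
-/

open Matrix Filter Topology Metric
open scoped InnerProductSpace

section LinearAlgebra

open Finset

theorem sum_mul_le_sum_sort_top {n k : ℕ} (hk : 0 < k) (w c : Fin n → ℝ)
    (hc₀ : ∀ j, 0 ≤ c j) (hc₁ : ∀ j, c j ≤ 1) (hc : ∑ j, c j = k) :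
    ∑ j, w j * c j ≤ ∑ i : Fin n, if n - k ≤ (i : ℕ) then w (Tuple.sort w i) else 0 := by
  have hkn : k ≤ n := by
    have : (k : ℝ) ≤ n := hc ▸ (sum_le_sum fun j _ => hc₁ j).trans (by simp)
    exact_mod_cast this
  set v := w ∘ Tuple.sort w
  set θ := v ⟨n - k, by omega⟩
  have hcard : ∑ i : Fin n, (if n - k ≤ (i : ℕ) then (1 : ℝ) else 0) = k := by
    rw [sum_boole, Nat.cast_inj]
    have := card_filter_add_card_filter_not (s := univ) (fun i : Fin n => (i : ℕ) < n - k)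
    simp only [Fin.card_filter_val_lt, not_lt, card_univ, Fintype.card_fin] at this
    omega
  -- `θ` is the `k`-th largest value of `w`, so the top-`k` sum is `θ k + ∑ (w - θ)⁺`.
  have htop : ∀ i : Fin n, max (v i - θ) 0 = if n - k ≤ (i : ℕ) then v i - θ else 0 := by
    intro i
    split_ifs with h
    · exact max_eq_left (sub_nonneg.2 (Tuple.monotone_sort w (Fin.le_def.2 h)))
    · exact max_eq_right (sub_nonpos.2
        (Tuple.monotone_sort w (Fin.le_def.2 (show (i : ℕ) ≤ n - k by omega))))
  calc ∑ j, w j * c j = ∑ j, (w j - θ) * c j + θ * k := by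
        rw [← hc, mul_sum, ← sum_add_distrib]; congr 1; ext j; ring
    _ ≤ ∑ j, max (w j - θ) 0 + θ * k := by
        gcongr with j
        rcases le_total (w j - θ) 0 with h | h
        · exact (mul_nonpos_of_nonpos_of_nonneg h (hc₀ j)).trans (le_max_right _ _)
        · exact (mul_le_of_le_one_right h (hc₁ j)).trans (le_max_left _ _)
    _ = ∑ i, max (v i - θ) 0 + θ * k := by
        rw [← Equiv.sum_comp (Tuple.sort w)]; rfl
    _ = _ := by
        rw [sum_congr rfl fun i _ => htop i, ← hcard, mul_sum, ← sum_add_distrib]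
        congr 1; ext i; split_ifs <;> simp [v]

variable {n : ℕ}

theorem Matrix.IsHermitian.inner_toEuclideanLin_self {X : Matrix (Fin n) (Fin n) ℝ}
    (hX : X.IsHermitian) (v : EuclideanSpace ℝ (Fin n)) :
    ⟪v, toEuclideanLin X v⟫_ℝ = ∑ m, hX.eigenvalues m * ⟪hX.eigenvectorBasis m, v⟫_ℝ ^ 2 := by
  rw [← hX.eigenvectorBasis.sum_inner_mul_inner]
  refine sum_congr rfl fun m _ => ?_
  rw [← isSymmetric_toEuclideanLin_iff.mpr hX, toLpLin_apply, hX.mulVec_eigenvectorBasis,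
    WithLp.toLp_smul, WithLp.toLp_ofLp, real_inner_smul_left, real_inner_comm v]
  ring

/-- Ky Fan's inequality. -/
theorem sum_inner_toEuclideanLin_le_Pplus {k : ℕ} (hk : 0 < k) {X : Matrix (Fin n) (Fin n) ℝ}
    (hX : X.IsHermitian) {w : Fin k → EuclideanSpace ℝ (Fin n)} (hw : Orthonormal ℝ w) :
    ∑ i, ⟪w i, toEuclideanLin X (w i)⟫_ℝ ≤ Pplus k X := by
  set b := hX.eigenvectorBasis
  have hPplus : Pplus k X = ∑ i : Fin n,
      if n - k ≤ (i : ℕ) then hX.eigenvalues (Tuple.sort hX.eigenvalues i) else 0 := by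
    unfold Pplus sortedEig
    rw [dif_pos hX]
    rfl
  simp_rw [hPplus, hX.inner_toEuclideanLin_self]
  rw [sum_comm]
  simp_rw [← mul_sum]
  refine sum_mul_le_sum_sort_top hk _ _ (fun m => sum_nonneg fun i _ => sq_nonneg _)
    (fun m => ?_) ?_
  · calc ∑ i, ⟪b m, w i⟫_ℝ ^ 2 = ∑ i, ‖⟪w i, b m⟫_ℝ‖ ^ 2 := by
          simp_rw [Real.norm_eq_abs, sq_abs, real_inner_comm]
      _ ≤ ‖b m‖ ^ 2 := hw.sum_inner_products_le _
      _ = 1 := by simp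
  · calc ∑ m, ∑ i, ⟪b m, w i⟫_ℝ ^ 2 = ∑ i, ⟪w i, w i⟫_ℝ := by
          rw [sum_comm]
          refine sum_congr rfl fun i _ => ?_
          rw [← b.sum_inner_mul_inner]
          simp_rw [real_inner_comm (w i), sq]
      _ = k := by simp [hw.1]

theorem exists_orthonormal_apply_eq {E : Type*} [NormedAddCommGroup E] [InnerProductSpace ℝ E]
    [FiniteDimensional ℝ E] {k : ℕ} (hk : k ≤ Module.finrank ℝ E) {e : E} (he : ‖e‖ = 1)
    (i₀ : Fin k) : ∃ w : Fin k → E, Orthonormal ℝ w ∧ w i₀ = e := by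
  have he' : Orthonormal ℝ (({Fin.castLE hk i₀} : Set _).domRestrict fun _ => e) := by
    rw [orthonormal_iff_ite]
    rintro ⟨i, rfl⟩ ⟨j, rfl⟩
    simp [Set.domRestrict, he]
  obtain ⟨b, hb⟩ := he'.exists_orthonormalBasis_extension_of_card_eq (Fintype.card_fin _).symm
  exact ⟨b ∘ Fin.castLE hk, b.orthonormal.comp _ (Fin.castLE_injective hk), hb _ rfl⟩

end LinearAlgebra

section Hessian

open Finset

variable {N : ℕ} {f g : EuclideanSpace ℝ (Fin N) → ℝ} {x : EuclideanSpace ℝ (Fin N)}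

theorem hessianMatrix_apply (f : EuclideanSpace ℝ (Fin N) → ℝ) (x : EuclideanSpace ℝ (Fin N))
    (i j : Fin N) :
    hessianMatrix f x i j =
      fderiv ℝ (fderiv ℝ f) x (EuclideanSpace.single i 1) (EuclideanSpace.single j 1) := by
  simp [hessianMatrix, iteratedFDeriv_two_apply]

theorem hessianMatrix_isHermitian (hf : ContDiffAt ℝ 2 f x) : (hessianMatrix f x).IsHermitian := by
  ext i j
  simp only [conjTranspose_apply, star_trivial, hessianMatrix_apply]
  exact (hf.isSymmSndFDerivAt (by simp)).eq _ _

theorem inner_toEuclideanLin_hessianMatrix (f : EuclideanSpace ℝ (Fin N) → ℝ)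
    (x v : EuclideanSpace ℝ (Fin N)) :
    ⟪v, toEuclideanLin (hessianMatrix f x) v⟫_ℝ = fderiv ℝ (fderiv ℝ f) x v v := by
  conv_rhs => rw [← (EuclideanSpace.basisFun (Fin N) ℝ).sum_repr v]
  simp only [toLpLin_apply, PiLp.inner_apply, mulVec, dotProduct, hessianMatrix_apply,
    RCLike.inner_apply, Real.ringHom_apply, sum_mul, EuclideanSpace.basisFun_repr,
    EuclideanSpace.basisFun_apply, map_sum, map_smul, _root_.sum_apply, _root_.smul_apply,
    smul_eq_mul, mul_sum]
  rw [sum_comm]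
  exact sum_congr rfl fun _ _ => sum_congr rfl fun _ _ => by ring

theorem Filter.EventuallyEq.hessianMatrix_eq (h : f =ᶠ[𝓝 x] g) :
    hessianMatrix f x = hessianMatrix g x := by
  ext i j
  simp only [hessianMatrix, (h.iteratedFDeriv ℝ 2).eq_of_nhds]

end Hessian

section Viscosity

theorem ContDiffAt.exists_contDiff_eventuallyEq {E : Type*} [NormedAddCommGroup E]
    [NormedSpace ℝ E] [HasContDiffBump E] {f : E → ℝ} {x : E} {n : ℕ}
    (hf : ContDiffAt ℝ n f x) : ∃ ψ : E → ℝ, ContDiff ℝ n ψ ∧ ψ =ᶠ[𝓝 x] f := by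
  obtain ⟨U, hU, hfU⟩ := hf.contDiffOn le_rfl (by simp)
  obtain ⟨r, hr, hball⟩ := Metric.mem_nhds_iff.1 hU
  let bump : ContDiffBump x := ⟨r / 4, r / 2, by positivity, by linarith⟩
  refine ⟨fun y => bump y * f y, contDiff_iff_contDiffAt.2 fun y => ?_,
    bump.eventuallyEq_one.mono fun y hy => by simp [hy]⟩
  by_cases hy : y ∈ ball x r
  · exact bump.contDiff.contDiffAt.mul
      (hfU.contDiffAt (mem_of_superset (isOpen_ball.mem_nhds hy) hball))
  · have hy' : y ∉ tsupport bump := by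
      rw [bump.tsupport_eq, mem_closedBall]
      rw [mem_ball] at hy
      dsimp [bump]
      linarith
    rw [notMem_tsupport_iff_eventuallyEq] at hy'
    exact (contDiffAt_const (c := (0 : ℝ))).congr_of_eventuallyEq
      (hy'.mono fun z hz => by simp [show bump z = 0 from hz])

variable {N : ℕ} {F : Matrix (Fin N) (Fin N) ℝ → ℝ} {Ω : Set (EuclideanSpace ℝ (Fin N))}
  {u φ : EuclideanSpace ℝ (Fin N) → ℝ}

theorem IsViscositySupersolution.le_of_contDiffAt {g : ℝ → ℝ} {x₀ : EuclideanSpace ℝ (Fin N)}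
    (hu : IsViscositySupersolution F g Ω u) (hx₀ : x₀ ∈ Ω) (hφ : ContDiffAt ℝ 2 φ x₀)
    (hmin : IsLocalMinOn (fun x => u x - φ x) Ω x₀) :
    F (hessianMatrix φ x₀) + g (u x₀) ≤ 0 := by
  obtain ⟨ψ, hψ, hψφ⟩ := hφ.exists_contDiff_eventuallyEq
  rw [← hψφ.hessianMatrix_eq]
  refine hu x₀ hx₀ ψ hψ (hmin.congr ?_ hx₀)
  filter_upwards [nhdsWithin_le_nhds hψφ] with y hy
  rw [hy]

theorem IsViscositySupersolution.le_of_isCompact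
    {K U : Set (EuclideanSpace ℝ (Fin N))} {Φ : EuclideanSpace ℝ (Fin N) → ℝ}
    (hu : IsViscositySupersolution F (fun _ => 0) Ω u) (hK : IsCompact K)
    (hu_lsc : LowerSemicontinuousOn u K) (hΦ : ContinuousOn Φ K) (hU : IsOpen U)
    (hUK : U ⊆ K ∩ Ω) (hΦU : ∀ x ∈ U, ContDiffAt ℝ 2 Φ x ∧ 0 < F (hessianMatrix Φ x))
    (hbdry : ∀ x ∈ K \ U, Φ x ≤ u x) {x : EuclideanSpace ℝ (Fin N)} (hx : x ∈ K) :
    Φ x ≤ u x := by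
  obtain ⟨x₀, hx₀K, hmin⟩ :=
    (hu_lsc.add hΦ.neg.lowerSemicontinuousOn).exists_isMinOn ⟨x, hx⟩ hK
  have hmin' : ∀ y ∈ K, u x₀ - Φ x₀ ≤ u y - Φ y := fun y hy => by
    simpa [sub_eq_add_neg] using hmin hy
  suffices 0 ≤ u x₀ - Φ x₀ by linarith [hmin' x hx]
  by_cases hx₀U : x₀ ∈ U
  · obtain ⟨hΦx₀, hpos⟩ := hΦU x₀ hx₀U
    have hloc : IsLocalMinOn (fun y => u y - Φ y) Ω x₀ := by
      filter_upwards [mem_nhdsWithin_of_mem_nhds (hU.mem_nhds hx₀U)] with y hy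
      exact hmin' y (hUK hy).1
    have := hu.le_of_contDiffAt (hUK hx₀U).2 hΦx₀ hloc
    linarith
  · linarith [hbdry x₀ ⟨hx₀K, hx₀U⟩]

end Viscosity

section Barrier

open Set

variable {N : ℕ}

theorem HasDerivAt.comp_norm_sq {h : ℝ → ℝ} {h' : ℝ} {x : EuclideanSpace ℝ (Fin N)}
    (hh : HasDerivAt h h' (‖x‖ ^ 2)) :
    HasFDerivAt (fun y : EuclideanSpace ℝ (Fin N) => h (‖y‖ ^ 2)) ((2 * h') • innerSL ℝ x) x := by
  refine (hh.comp_hasFDerivAt x (hasFDerivAt_id x).norm_sq).congr_fderiv ?_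
  ext v
  simp
  ring

noncomputable def coordMulRadial (ℓ : Fin N) (g : ℝ → ℝ) (x : EuclideanSpace ℝ (Fin N)) : ℝ :=
  x ℓ * g (‖x‖ ^ 2)

variable {ℓ : Fin N} {g : ℝ → ℝ} {x : EuclideanSpace ℝ (Fin N)}

theorem contDiffAt_coordMulRadial (hg : ContDiffOn ℝ 2 g (Ioi 0)) (hx : x ≠ 0) :
    ContDiffAt ℝ 2 (coordMulRadial ℓ g) x :=
  (EuclideanSpace.proj ℓ).contDiff.contDiffAt.mul
    ((hg.contDiffAt (Ioi_mem_nhds (by positivity))).comp x (contDiff_norm_sq ℝ).contDiffAt)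

theorem hasFDerivAt_coordMulRadial (hg : DifferentiableAt ℝ g (‖x‖ ^ 2)) :
    HasFDerivAt (coordMulRadial ℓ g)
      (g (‖x‖ ^ 2) • EuclideanSpace.proj ℓ + (2 * x ℓ * deriv g (‖x‖ ^ 2)) • innerSL ℝ x) x := by
  refine ((EuclideanSpace.proj ℓ).hasFDerivAt.mul hg.hasDerivAt.comp_norm_sq).congr_fderiv ?_
  ext v
  simp
  ring

theorem fderiv_fderiv_coordMulRadial_apply_self (hg : ContDiffOn ℝ 2 g (Ioi 0)) (hx : x ≠ 0)
    (v : EuclideanSpace ℝ (Fin N)) :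
    fderiv ℝ (fderiv ℝ (coordMulRadial ℓ g)) x v v =
      4 * deriv g (‖x‖ ^ 2) * ⟪x, v⟫_ℝ * v ℓ + 4 * x ℓ * deriv (deriv g) (‖x‖ ^ 2) * ⟪x, v⟫_ℝ ^ 2
        + 2 * x ℓ * deriv g (‖x‖ ^ 2) * ‖v‖ ^ 2 := by
  have hdiff : ∀ y : EuclideanSpace ℝ (Fin N), y ≠ 0 → DifferentiableAt ℝ g (‖y‖ ^ 2) :=
    fun y hy => (hg.contDiffAt (Ioi_mem_nhds (by positivity))).differentiableAt two_ne_zero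
  have hg' : DifferentiableAt ℝ (deriv g) (‖x‖ ^ 2) :=
    ((hg.deriv_of_isOpen isOpen_Ioi (by norm_num : (1 : WithTop ℕ∞) + 1 ≤ 2)).contDiffAt
      (Ioi_mem_nhds (by positivity))).differentiableAt one_ne_zero
  have hΦ' : DifferentiableAt ℝ (fderiv ℝ (coordMulRadial ℓ g)) x :=
    ((contDiffAt_coordMulRadial hg hx).fderiv_right (m := 1) (by norm_num)).differentiableAt
      one_ne_zero
  have hfderiv : (fun y => fderiv ℝ (coordMulRadial ℓ g) y v) =ᶠ[𝓝 x]
      fun y => v ℓ * g (‖y‖ ^ 2) + 2 * y ℓ * deriv g (‖y‖ ^ 2) * ⟪v, y⟫_ℝ := by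
    filter_upwards [isOpen_ne.mem_nhds hx] with y hy
    rw [(hasFDerivAt_coordMulRadial (hdiff y hy)).fderiv]
    simp [real_inner_comm, mul_comm]
  have hF := ((hdiff x hx).hasDerivAt.comp_norm_sq.const_mul (v ℓ)).add
    ((((EuclideanSpace.proj ℓ).hasFDerivAt.const_mul 2).mul hg'.hasDerivAt.comp_norm_sq).mul
      (innerSL ℝ v).hasFDerivAt)
  have h := (hΦ'.hasFDerivAt.clm_apply (hasFDerivAt_const v x)).unique
    (hF.congr_of_eventuallyEq hfderiv)
  rw [ContinuousLinearMap.comp_zero, zero_add] at h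
  rw [← ContinuousLinearMap.flip_apply, h]
  simp only [PiLp.proj_apply, Pi.mul_apply, coe_innerSL_apply, smul_add, _root_.add_apply,
    _root_.smul_apply, real_inner_comm v x, smul_eq_mul, inner_self_eq_norm_sq_to_K,
    Real.ringHom_apply]
  ring

theorem le_Pplus_hessianMatrix_coordMulRadial {k : ℕ} (hk : 0 < k) (hkN : k ≤ N)
    (hg : ContDiffOn ℝ 2 g (Ioi 0)) (hx : x ≠ 0) :
    x ℓ * ((2 * k + 4) * deriv g (‖x‖ ^ 2) + 4 * ‖x‖ ^ 2 * deriv (deriv g) (‖x‖ ^ 2)) ≤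
      Pplus k (hessianMatrix (coordMulRadial ℓ g) x) := by
  set i₀ : Fin k := ⟨0, hk⟩
  have hx₀ : ‖x‖ ≠ 0 := norm_ne_zero_iff.2 hx
  obtain ⟨w, hw, hwi₀⟩ := exists_orthonormal_apply_eq (by simpa using hkN)
    (by rw [norm_smul, norm_inv, norm_norm, inv_mul_cancel₀ hx₀] : ‖‖x‖⁻¹ • x‖ = 1) i₀
  have hxw : ∀ i, ⟪x, w i⟫_ℝ = if i = i₀ then ‖x‖ else 0 := by
    intro i
    have hx' : ⟪x, w i⟫_ℝ = ‖x‖ * ⟪w i₀, w i⟫_ℝ := by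
      rw [hwi₀, real_inner_smul_left, mul_inv_cancel_left₀ hx₀]
    rw [hx', orthonormal_iff_ite.1 hw]
    by_cases h : i = i₀ <;> simp [h, Ne.symm]
  have hwℓ : w i₀ ℓ = ‖x‖⁻¹ * x ℓ := by simp [hwi₀]
  refine le_of_eq_of_le ?_ (sum_inner_toEuclideanLin_le_Pplus hk
    (hessianMatrix_isHermitian (contDiffAt_coordMulRadial hg hx)) hw)
  simp_rw [inner_toEuclideanLin_hessianMatrix, fderiv_fderiv_coordMulRadial_apply_self hg hx,
    hxw, hw.1]
  have hterm : ∀ i, (4 * deriv g (‖x‖ ^ 2) * (if i = i₀ then ‖x‖ else 0)) * w i ℓ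
        + 4 * x ℓ * deriv (deriv g) (‖x‖ ^ 2) * (if i = i₀ then ‖x‖ else 0) ^ 2
        + 2 * x ℓ * deriv g (‖x‖ ^ 2) * 1 ^ 2
      = 2 * x ℓ * deriv g (‖x‖ ^ 2) + if i = i₀ then
        4 * deriv g (‖x‖ ^ 2) * ‖x‖ * w i₀ ℓ + 4 * x ℓ * deriv (deriv g) (‖x‖ ^ 2) * ‖x‖ ^ 2
        else 0 := by
    intro i
    split_ifs with h
    · rw [h]; ring
    · ring
  rw [Finset.sum_congr rfl fun i _ => hterm i, Finset.sum_add_distrib, Finset.sum_ite_eq',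
    if_pos (Finset.mem_univ _), Finset.sum_const, Finset.card_univ, Fintype.card_fin, hwℓ]
  field_simp
  ring

end Barrier

section Profile

open Set

noncomputable def hadamardProfile (k a b c s : ℝ) : ℝ := a + b * s ^ (-k / 2) + c * s ^ (-k)

variable {k a b c s : ℝ}

theorem hasDerivAt_hadamardProfile (hs : 0 < s) :
    HasDerivAt (hadamardProfile k a b c)
      (b * ((-k / 2) * s ^ (-k / 2 - 1)) + c * (-k * s ^ (-k - 1))) s :=
  (((Real.hasDerivAt_rpow_const (Or.inl hs.ne')).const_mul b).const_add a).add
    ((Real.hasDerivAt_rpow_const (Or.inl hs.ne')).const_mul c)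

theorem contDiffOn_hadamardProfile : ContDiffOn ℝ 2 (hadamardProfile k a b c) (Ioi 0) :=
  fun _ hs => (contDiffAt_const.add (contDiffAt_const.mul (Real.contDiffAt_rpow_const_of_ne
    (ne_of_gt hs))) |>.add (contDiffAt_const.mul (Real.contDiffAt_rpow_const_of_ne
    (ne_of_gt hs)))).contDiffWithinAt

theorem hadamardProfile_deriv_combination (hs : 0 < s) :
    (2 * k + 4) * deriv (hadamardProfile k a b c) s
      + 4 * s * deriv (deriv (hadamardProfile k a b c)) s = 2 * k ^ 2 * c * s ^ (-k - 1) := by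
  have hderiv : deriv (hadamardProfile k a b c) =ᶠ[𝓝 s]
      fun t => b * ((-k / 2) * t ^ (-k / 2 - 1)) + c * (-k * t ^ (-k - 1)) := by
    filter_upwards [Ioi_mem_nhds hs] with t ht
    exact (hasDerivAt_hadamardProfile ht).deriv
  have hderiv' : HasDerivAt
      (fun t => b * ((-k / 2) * t ^ (-k / 2 - 1)) + c * (-k * t ^ (-k - 1)))
      (b * (-k / 2 * ((-k / 2 - 1) * s ^ (-k / 2 - 1 - 1)))
        + c * (-k * ((-k - 1) * s ^ (-k - 1 - 1)))) s :=
    (((Real.hasDerivAt_rpow_const (Or.inl hs.ne')).const_mul _).const_mul b).add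
      (((Real.hasDerivAt_rpow_const (Or.inl hs.ne')).const_mul _).const_mul c)
  have hpow : ∀ p : ℝ, s ^ (p - 1) = s ^ (p - 1 - 1) * s := fun p => by
    rw [← Real.rpow_add_one hs.ne', sub_add_cancel]
  rw [hderiv.deriv_eq, hderiv'.deriv, (hasDerivAt_hadamardProfile hs).deriv, hpow (-k / 2),
    hpow (-k)]
  ring

theorem hadamardProfile_norm_sq {N : ℕ} (x : EuclideanSpace ℝ (Fin N)) :
    hadamardProfile k a b c (‖x‖ ^ 2) = a + b * ‖x‖ ^ (-k) + c * (‖x‖ ^ 2) ^ (-k) := by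
  rw [hadamardProfile, ← Real.rpow_natCast, ← Real.rpow_mul (norm_nonneg x)]
  ring_nf

end Profile

theorem le_of_forall_pos_add_mul_le {a b c : ℝ} (h : ∀ ε > 0, a + ε * c ≤ b) : a ≤ b := by
  have hlim : Tendsto (fun ε => a + ε * c) (𝓝[>] 0) (𝓝 a) :=
    (Continuous.tendsto' (by fun_prop) 0 a (by simp)).mono_left nhdsWithin_le_nhds
  exact le_of_tendsto hlim (eventually_nhdsWithin_of_forall h)

section HalfAnnulus

open Set

variable {N k : ℕ} {ℓ : Fin N} {u : EuclideanSpace ℝ (Fin N) → ℝ}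

theorem Pplus_hessianMatrix_coordMulRadial_hadamardProfile_pos (hk : 0 < k) (hkN : k ≤ N)
    (a b : ℝ) {c : ℝ} (hc : 0 < c) {x : EuclideanSpace ℝ (Fin N)} (hx : 0 < x ℓ) :
    0 < Pplus k (hessianMatrix (coordMulRadial ℓ (hadamardProfile k a b c)) x) := by
  have hx₀ : x ≠ 0 := by rintro rfl; simp at hx
  have hs : 0 < ‖x‖ ^ 2 := by positivity
  refine lt_of_lt_of_le ?_
    (le_Pplus_hessianMatrix_coordMulRadial hk hkN contDiffOn_hadamardProfile hx₀)
  rw [hadamardProfile_deriv_combination hs]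
  have : (0 : ℝ) < k := by exact_mod_cast hk
  positivity

theorem isCompact_halfAnnulus (ℓ : Fin N) (r₁ r₂ : ℝ) :
    IsCompact {y : EuclideanSpace ℝ (Fin N) | r₁ ≤ ‖y‖ ∧ ‖y‖ ≤ r₂ ∧ 0 ≤ y ℓ} :=
  (isCompact_closedBall 0 r₂).of_isClosed_subset
    ((isClosed_le continuous_const continuous_norm).inter
      ((isClosed_le continuous_norm continuous_const).inter
        (isClosed_le continuous_const (EuclideanSpace.proj ℓ).continuous)))
    fun _ hy => mem_closedBall_zero_iff.2 hy.2.1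

theorem IsViscositySupersolution.coord_mul_add_le_of_le_on_spheres (hk : 0 < k) (hkN : k ≤ N)
    (hu_lsc : LowerSemicontinuousOn u {x | 0 ≤ x ℓ}) (hu₀ : ∀ x, 0 ≤ x ℓ → 0 ≤ u x)
    (hu : IsViscositySupersolution (Pplus k) (fun _ => 0) {x | 0 < x ℓ} u)
    {r₁ r₂ A B : ℝ} (hr₁ : 0 < r₁)
    (hbdry : ∀ x, 0 < x ℓ → (‖x‖ = r₁ ∨ ‖x‖ = r₂) → x ℓ * (A + B * ‖x‖ ^ (-(k : ℝ))) ≤ u x)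
    {ε : ℝ} (hε : 0 < ε) {x : EuclideanSpace ℝ (Fin N)} (hx : 0 < x ℓ) (hx₁ : r₁ ≤ ‖x‖)
    (hx₂ : ‖x‖ ≤ r₂) :
    x ℓ * (A + B * ‖x‖ ^ (-(k : ℝ)))
      + ε * (x ℓ * ((‖x‖ ^ 2) ^ (-(k : ℝ)) - (r₁ ^ 2) ^ (-(k : ℝ)))) ≤ u x := by
  set K : Set (EuclideanSpace ℝ (Fin N)) := {y | r₁ ≤ ‖y‖ ∧ ‖y‖ ≤ r₂ ∧ 0 ≤ y ℓ}
  have hK0 : ∀ y ∈ K, y ≠ 0 := fun y hy h => by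
    have := hy.1; rw [h, norm_zero] at this; linarith
  have hUo : IsOpen {y : EuclideanSpace ℝ (Fin N) | r₁ < ‖y‖ ∧ ‖y‖ < r₂ ∧ 0 < y ℓ} :=
    (isOpen_lt continuous_const continuous_norm).inter
      ((isOpen_lt continuous_norm continuous_const).inter
        (isOpen_lt continuous_const (EuclideanSpace.proj ℓ).continuous))
  set Φ := coordMulRadial ℓ (hadamardProfile k (A - ε * (r₁ ^ 2) ^ (-(k : ℝ))) B ε)
  have hΦ : ∀ y, Φ y = y ℓ * (A + B * ‖y‖ ^ (-(k : ℝ)))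
      + ε * (y ℓ * ((‖y‖ ^ 2) ^ (-(k : ℝ)) - (r₁ ^ 2) ^ (-(k : ℝ)))) := fun y => by
    simp only [Φ, coordMulRadial, hadamardProfile_norm_sq]
    ring
  have hpert : ∀ y ∈ K, ε * (y ℓ * ((‖y‖ ^ 2) ^ (-(k : ℝ)) - (r₁ ^ 2) ^ (-(k : ℝ)))) ≤ 0 :=
    fun y hy => mul_nonpos_of_nonneg_of_nonpos hε.le (mul_nonpos_of_nonneg_of_nonpos hy.2.2
      (sub_nonpos.2 (Real.rpow_le_rpow_of_nonpos (by positivity)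
        (pow_le_pow_left₀ hr₁.le hy.1 2) (by simp))))
  rw [← hΦ]
  refine hu.le_of_isCompact (isCompact_halfAnnulus ℓ r₁ r₂) (hu_lsc.mono fun y hy => hy.2.2)
    (fun y hy => (contDiffAt_coordMulRadial contDiffOn_hadamardProfile
      (hK0 y hy)).continuousAt.continuousWithinAt) hUo
    (fun y hy => ⟨⟨hy.1.le, hy.2.1.le, hy.2.2.le⟩, hy.2.2⟩)
    (fun y hy => ⟨contDiffAt_coordMulRadial contDiffOn_hadamardProfile
      (hK0 y ⟨hy.1.le, hy.2.1.le, hy.2.2.le⟩),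
      Pplus_hessianMatrix_coordMulRadial_hadamardProfile_pos hk hkN _ _ hε hy.2.2⟩)
    (fun y ⟨hyK, hyU⟩ => ?_) ⟨hx₁, hx₂, hx.le⟩
  rcases hyK.2.2.eq_or_lt with hy0 | hy0
  · simpa [Φ, coordMulRadial, ← hy0] using hu₀ y hyK.2.2
  · have hsph : ‖y‖ = r₁ ∨ ‖y‖ = r₂ := by
      by_contra h
      rw [not_or] at h
      exact hyU ⟨lt_of_le_of_ne hyK.1 (Ne.symm h.1), lt_of_le_of_ne hyK.2.1 h.2, hy0⟩
    show Φ y ≤ u y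
    rw [hΦ]
    linarith [hbdry y hy0 hsph, hpert y hyK]

end HalfAnnulus

section HalfBallInf

open Set

variable {N : ℕ} {ℓ : Fin N} {u : EuclideanSpace ℝ (Fin N) → ℝ}

theorem closure_setOf_pos_apply (ℓ : Fin N) :
    closure {x : EuclideanSpace ℝ (Fin N) | 0 < x ℓ} = {x | 0 ≤ x ℓ} := by
  let π : EuclideanSpace ℝ (Fin N) →L[ℝ] ℝ := EuclideanSpace.proj ℓ
  have h := (π.isOpenMap fun t => ⟨EuclideanSpace.single ℓ t, by simp [π]⟩)
    |>.preimage_closure_eq_closure_preimage π.continuous (Ioi 0)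
  rw [closure_Ioi] at h
  exact h.symm

noncomputable def halfBallInf (ℓ : Fin N) (u : EuclideanSpace ℝ (Fin N) → ℝ) (r : ℝ) : ℝ :=
  sInf ((fun x => u x / x ℓ) '' ({x | 0 < x ℓ} ∩ closedBall 0 r))

theorem halfBallInf_le_div (hu₀ : ∀ x, 0 < x ℓ → 0 ≤ u x) {r : ℝ}
    {x : EuclideanSpace ℝ (Fin N)} (hx : 0 < x ℓ) (hxr : ‖x‖ ≤ r) :
    halfBallInf ℓ u r ≤ u x / x ℓ :=
  csInf_le ⟨0, forall_mem_image.2 fun y hy => div_nonneg (hu₀ y hy.1) (le_of_lt hy.1)⟩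
    ⟨x, ⟨hx, mem_closedBall_zero_iff.2 hxr⟩, rfl⟩

theorem halfBallInf_mul_le (hu₀ : ∀ x, 0 < x ℓ → 0 ≤ u x) {r : ℝ}
    {x : EuclideanSpace ℝ (Fin N)} (hx : 0 < x ℓ) (hxr : ‖x‖ ≤ r) :
    halfBallInf ℓ u r * x ℓ ≤ u x :=
  (le_div_iff₀ hx).1 (halfBallInf_le_div hu₀ hx hxr)

theorem le_halfBallInf {r c : ℝ} (hr : 0 < r)
    (h : ∀ x : EuclideanSpace ℝ (Fin N), 0 < x ℓ → ‖x‖ ≤ r → c ≤ u x / x ℓ) :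
    c ≤ halfBallInf ℓ u r :=
  le_csInf ⟨_, EuclideanSpace.single ℓ r, ⟨by simpa using hr, by simp [abs_of_pos hr]⟩, rfl⟩
    (forall_mem_image.2 fun x hx => h x hx.1 (mem_closedBall_zero_iff.1 hx.2))

theorem halfBallInf_nonneg (hu₀ : ∀ x, 0 < x ℓ → 0 ≤ u x) {r : ℝ} (hr : 0 < r) :
    0 ≤ halfBallInf ℓ u r :=
  le_halfBallInf hr fun x hx _ => div_nonneg (hu₀ x hx) hx.le

theorem halfBallInf_anti (hu₀ : ∀ x, 0 < x ℓ → 0 ≤ u x) {r s : ℝ} (hr : 0 < r) (hrs : r ≤ s) :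
    halfBallInf ℓ u s ≤ halfBallInf ℓ u r :=
  le_halfBallInf hr fun _ hx hxr => halfBallInf_le_div hu₀ hx (hxr.trans hrs)

end HalfBallInf

section ThreeCircles

open Set

variable {N k : ℕ} {ℓ : Fin N} {u : EuclideanSpace ℝ (Fin N) → ℝ}

theorem add_mul_rpow_le_halfBallInf (hk : 0 < k) (hkN : k ≤ N)
    (hu_lsc : LowerSemicontinuousOn u {x | 0 ≤ x ℓ}) (hu₀ : ∀ x, 0 ≤ x ℓ → 0 ≤ u x)
    (hu : IsViscositySupersolution (Pplus k) (fun _ => 0) {x | 0 < x ℓ} u)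
    {r₁ r r₂ A B : ℝ} (hr₁ : 0 < r₁) (h₁ : r₁ ≤ r) (h₂ : r ≤ r₂) (hB : 0 ≤ B)
    (hA₁ : A + B * r₁ ^ (-(k : ℝ)) ≤ halfBallInf ℓ u r₁)
    (hA₂ : A + B * r₂ ^ (-(k : ℝ)) ≤ halfBallInf ℓ u r₂) :
    A + B * r ^ (-(k : ℝ)) ≤ halfBallInf ℓ u r := by
  have hu₀' : ∀ x, 0 < x ℓ → 0 ≤ u x := fun x hx => hu₀ x hx.le
  have hk' : -(k : ℝ) ≤ 0 := by simp
  refine le_halfBallInf (hr₁.trans_le h₁) fun y hy hyr => (le_div_iff₀ hy).2 ?_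
  by_cases hy₁ : ‖y‖ ≤ r₁
  · calc (A + B * r ^ (-(k : ℝ))) * y ℓ ≤ (A + B * r₁ ^ (-(k : ℝ))) * y ℓ := by
          gcongr (A + B * ?_) * _
          exact Real.rpow_le_rpow_of_nonpos hr₁ h₁ hk'
      _ ≤ halfBallInf ℓ u r₁ * y ℓ := by gcongr
      _ ≤ u y := halfBallInf_mul_le hu₀' hy hy₁
  · have hbdry : ∀ z : EuclideanSpace ℝ (Fin N), 0 < z ℓ → (‖z‖ = r₁ ∨ ‖z‖ = r₂) →
        z ℓ * (A + B * ‖z‖ ^ (-(k : ℝ))) ≤ u z := by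
      rintro z hz (hz₁ | hz₂)
      · rw [hz₁, mul_comm]
        exact (mul_le_mul_of_nonneg_right hA₁ hz.le).trans (halfBallInf_mul_le hu₀' hz hz₁.le)
      · rw [hz₂, mul_comm]
        exact (mul_le_mul_of_nonneg_right hA₂ hz.le).trans (halfBallInf_mul_le hu₀' hz hz₂.le)
    calc (A + B * r ^ (-(k : ℝ))) * y ℓ ≤ y ℓ * (A + B * ‖y‖ ^ (-(k : ℝ))) := by
          rw [mul_comm]
          gcongr _ * (A + B * ?_)
          exact Real.rpow_le_rpow_of_nonpos (hr₁.trans (not_le.1 hy₁)) hyr hk'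
      _ ≤ u y := le_of_forall_pos_add_mul_le fun ε hε =>
          hu.coord_mul_add_le_of_le_on_spheres hk hkN hu_lsc hu₀ hr₁ hbdry hε hy
            (not_le.1 hy₁).le (hyr.trans h₂)

theorem halfBallInf_three_circles (hk : 0 < k) (hkN : k ≤ N)
    (hu_lsc : LowerSemicontinuousOn u {x | 0 ≤ x ℓ}) (hu₀ : ∀ x, 0 ≤ x ℓ → 0 ≤ u x)
    (hu : IsViscositySupersolution (Pplus k) (fun _ => 0) {x | 0 < x ℓ} u)
    (r₁ r r₂ : ℝ) (hr₁ : 0 < r₁) (h₁₂ : r₁ < r₂) (h₁ : r₁ ≤ r) (h₂ : r ≤ r₂) :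
    (halfBallInf ℓ u r₁ * (r ^ (-(k : ℝ)) - r₂ ^ (-(k : ℝ)))
      + halfBallInf ℓ u r₂ * (r₁ ^ (-(k : ℝ)) - r ^ (-(k : ℝ))))
      / (r₁ ^ (-(k : ℝ)) - r₂ ^ (-(k : ℝ))) ≤ halfBallInf ℓ u r := by
  set μ := halfBallInf ℓ u
  have hD : 0 < r₁ ^ (-(k : ℝ)) - r₂ ^ (-(k : ℝ)) :=
    sub_pos.2 (Real.rpow_lt_rpow_of_neg hr₁ h₁₂ (by simpa using hk))
  set B := (μ r₁ - μ r₂) / (r₁ ^ (-(k : ℝ)) - r₂ ^ (-(k : ℝ)))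
  set A := μ r₁ - B * r₁ ^ (-(k : ℝ))
  have hB : 0 ≤ B :=
    div_nonneg (sub_nonneg.2 (halfBallInf_anti (fun x hx => hu₀ x hx.le) hr₁ h₁₂.le)) hD.le
  have hA₁ : A + B * r₁ ^ (-(k : ℝ)) = μ r₁ := by ring
  have hA₂ : A + B * r₂ ^ (-(k : ℝ)) = μ r₂ := by
    simp only [A, B]
    field_simp
    ring
  calc _ = A + B * r ^ (-(k : ℝ)) := by
        rw [← hA₁, ← hA₂]
        field_simp
        ring
    _ ≤ μ r := add_mul_rpow_le_halfBallInf hk hkN hu_lsc hu₀ hu hr₁ h₁ h₂ hB hA₁.le hA₂.le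

theorem mul_rpow_le_mul_rpow_of_three_circles {μ : ℝ → ℝ} {k : ℝ} (hk : 0 < k)
    (hμ₀ : ∀ r, 0 < r → 0 ≤ μ r)
    (h3 : ∀ r₁ r r₂ : ℝ, 0 < r₁ → r₁ < r₂ → r₁ ≤ r → r ≤ r₂ →
      (μ r₁ * (r ^ (-k) - r₂ ^ (-k)) + μ r₂ * (r₁ ^ (-k) - r ^ (-k))) / (r₁ ^ (-k) - r₂ ^ (-k))
        ≤ μ r)
    {r s : ℝ} (hr : 0 < r) (hrs : r ≤ s) : μ r * r ^ k ≤ μ s * s ^ k := by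
  rcases hrs.eq_or_lt with rfl | hrs
  · rfl
  have hs : 0 < s := hr.trans hrs
  have hk' : -k < 0 := by linarith
  have hlim : Tendsto (fun R => μ r * (s ^ (-k) - R ^ (-k)) / (r ^ (-k) - R ^ (-k))) atTop
      (𝓝 (μ r * (s ^ (-k) - 0) / (r ^ (-k) - 0))) :=
    ((tendsto_rpow_neg_atTop hk).const_sub _ |>.const_mul _).div
      ((tendsto_rpow_neg_atTop hk).const_sub _) (by simp [(Real.rpow_pos_of_pos hr _).ne'])
  have hev : ∀ᶠ R in atTop, μ r * (s ^ (-k) - R ^ (-k)) / (r ^ (-k) - R ^ (-k)) ≤ μ s := by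
    filter_upwards [eventually_gt_atTop s] with R hR
    refine le_trans ?_ (h3 r s R hr (hrs.trans hR) hrs.le hR.le)
    gcongr ?_ / _
    · exact (sub_pos.2 (Real.rpow_lt_rpow_of_neg hr (hrs.trans hR) hk')).le
    · exact le_add_of_nonneg_right (mul_nonneg (hμ₀ R (hs.trans hR))
        (sub_nonneg.2 (Real.rpow_le_rpow_of_nonpos hr hrs.le hk'.le)))
  have h := le_of_tendsto hlim hev
  rw [sub_zero, sub_zero, Real.rpow_neg hr.le, Real.rpow_neg hs.le, div_inv_eq_mul,
    mul_assoc, inv_mul_eq_div, ← mul_div_assoc, div_le_iff₀ (by positivity)] at h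
  exact h

end ThreeCircles

theorem statement17 (N k : ℕ) (hk : 0 < k) (hkN : k < N)
    (u : EuclideanSpace ℝ (Fin N) → ℝ) :
    let lastIdx : Fin N := ⟨N - 1, by omega⟩
    let Ω : Set (EuclideanSpace ℝ (Fin N)) := {x | 0 < x lastIdx}
    ∀ (_ : LowerSemicontinuousOn u (closure Ω)) (_ : ∀ x ∈ closure Ω, 0 ≤ u x)
      (_ : IsViscositySupersolution (Pplus k) (fun _ => 0) Ω u)
      (μ : ℝ → ℝ)
      (_ : ∀ r : ℝ, μ r = sInf ((fun x => u x / x lastIdx) '' (Ω ∩ Metric.closedBall 0 r))),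
      (∀ r₁ r r₂ : ℝ, 0 < r₁ → r₁ < r₂ → r₁ ≤ r → r ≤ r₂ →
        (μ r₁ * (r ^ (-(k : ℝ)) - r₂ ^ (-(k : ℝ)))
          + μ r₂ * (r₁ ^ (-(k : ℝ)) - r ^ (-(k : ℝ))))
          / (r₁ ^ (-(k : ℝ)) - r₂ ^ (-(k : ℝ))) ≤ μ r) ∧
      (∀ r s : ℝ, 0 < r → r ≤ s → μ r * r ^ (k : ℝ) ≤ μ s * s ^ (k : ℝ)) := by
  intro lastIdx Ω hu_lsc hu₀ hu μ hμ
  obtain rfl : μ = halfBallInf lastIdx u := funext hμ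
  rw [closure_setOf_pos_apply] at hu_lsc hu₀
  have h3 := halfBallInf_three_circles hk hkN.le hu_lsc hu₀ hu
  exact ⟨h3, fun r s hr hrs => mul_rpow_le_mul_rpow_of_three_circles (by positivity)
    (fun r hr => halfBallInf_nonneg (fun x hx => hu₀ x (le_of_lt hx)) hr) h3 hr hrs⟩
end
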